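/- Fix an integer r ≥ 3 and λ ∈ [1/5, 1]. Then for every ε ∈ (0,1], f_{r,λ}(ε) < λ², where f_{r,λ}(ε) = (1/(r−1)) · Σ_{i=1}^{r−1} C(r−1, i) · (1−ε)^{r−1−i} · ε^{i−1} · λ² / ( λ + (1−λ)·2^{1−i} ). -/

import Mathlib

/-!
Write `D_i = λ + (1 - λ) 2^{1-i}` and `n = r - 1`. For `λ ≥ 1/5` one has `i · D_i ≥ 1`, with
equality only at `i = 1`, so `C(n,i) / D_i ≤ i · C(n,i)`. Summed against
`(1-ε)^{n-i} ε^{i-1}`, the right-hand side is the derivative identity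
`∑ i C(n,i) ε^{i-1} (1-ε)^{n-i} = n (ε + (1-ε))^{n-1} = n`, and the term `i = n` is strict
because `ε > 0`. Hence `f_{r,λ}(ε) < λ² n / n = λ²`.
-/

open Finset in
/-- The function `f_{r,λ}(ε)` from Lemma 4.3 of the paper. -/
noncomputable def f (r : ℕ) (lam ε : ℝ) : ℝ :=
  (1 / (r - 1 : ℝ)) * ∑ i ∈ Finset.Icc 1 (r - 1),
    ((r - 1).choose i : ℝ) * (1 - ε) ^ (r - 1 - i) * ε ^ (i - 1) * lam ^ 2
      / (lam + (1 - lam) * (2 : ℝ) ^ ((1 : ℤ) - (i : ℤ)))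

open Finset

theorem sum_Icc_mul_choose_mul_pow {R : Type*} [CommSemiring R] (n : ℕ) (x y : R) :
    ∑ i ∈ Icc 1 n, (i * n.choose i : R) * x ^ (i - 1) * y ^ (n - i) = n * (x + y) ^ (n - 1) := by
  cases n with
  | zero => simp
  | succ m =>
    rw [← Ico_add_one_right_eq_Icc, sum_Ico_eq_sum_range, add_pow, mul_sum]
    refine sum_congr (by simp) fun k _ => ?_
    rw [show 1 + k - 1 = k by omega, show m + 1 - (1 + k) = m - k by omega, add_comm 1 k,
      Nat.add_sub_cancel]
    have hchoose : ((k + 1 : ℕ) * (m + 1).choose (k + 1) : R) = (m + 1 : ℕ) * m.choose k := by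
      rw [← Nat.cast_mul, ← Nat.cast_mul, mul_comm, Nat.add_one_mul_choose_eq]
    push_cast at hchoose ⊢
    rw [hchoose]
    ring

noncomputable def denom (lam : ℝ) (i : ℕ) : ℝ := lam + (1 - lam) * (2 : ℝ) ^ ((1 : ℤ) - i)

theorem denom_pos {lam : ℝ} (hlam : 0 < lam) (hlam1 : lam ≤ 1) (i : ℕ) : 0 < denom lam i :=
  add_pos_of_pos_of_nonneg hlam (mul_nonneg (by linarith) (zpow_pos two_pos _).le)

theorem five_lt_mul_one_add_four_mul_zpow {i : ℕ} (hi : 2 ≤ i) :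
    5 < (i : ℝ) * (1 + 4 * (2 : ℝ) ^ ((1 : ℤ) - i)) := by
  rcases lt_or_ge i 5 with hi5 | hi5
  · interval_cases i <;> norm_num
  · have : (5 : ℝ) ≤ i := by exact_mod_cast hi5
    nlinarith [zpow_pos (two_pos : (0 : ℝ) < 2) ((1 : ℤ) - i)]

theorem one_lt_mul_denom {lam : ℝ} (hlam : 1 / 5 ≤ lam) {i : ℕ} (hi : 2 ≤ i) :
    1 < i * denom lam i := by
  have hbound := five_lt_mul_one_add_four_mul_zpow hi
  have hpow : (2 : ℝ) ^ ((1 : ℤ) - i) ≤ 1 := zpow_le_one_of_nonpos₀ one_le_two (by omega)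
  have hi0 : (0 : ℝ) ≤ i := i.cast_nonneg
  -- `i * denom lam i` is increasing in `λ`, and `five_lt_…` is the case `λ = 1/5`.
  unfold denom
  nlinarith [mul_nonneg (mul_nonneg hi0 (sub_nonneg.2 hlam)) (sub_nonneg.2 hpow)]

theorem one_le_mul_denom {lam : ℝ} (hlam : 1 / 5 ≤ lam) {i : ℕ} (hi : 1 ≤ i) :
    1 ≤ i * denom lam i := by
  obtain rfl | hi := hi.eq_or_lt
  · simp [denom]
  · exact (one_lt_mul_denom hlam hi).le

theorem sum_choose_div_denom_lt {n : ℕ} (hn : 2 ≤ n) {lam : ℝ} (hlam : 1 / 5 ≤ lam)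
    (hlam1 : lam ≤ 1) {ε : ℝ} (hε0 : 0 < ε) (hε1 : ε ≤ 1) :
    ∑ i ∈ Icc 1 n, (n.choose i : ℝ) * (1 - ε) ^ (n - i) * ε ^ (i - 1) / denom lam i < n := by
  have hD := denom_pos (by linarith) hlam1
  calc ∑ i ∈ Icc 1 n, (n.choose i : ℝ) * (1 - ε) ^ (n - i) * ε ^ (i - 1) / denom lam i
      < ∑ i ∈ Icc 1 n, (i * n.choose i : ℝ) * ε ^ (i - 1) * (1 - ε) ^ (n - i) := by
        apply sum_lt_sum
        · intro i hi
          rw [div_le_iff₀ (hD i)]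
          have hweight := one_le_mul_denom hlam (mem_Icc.1 hi).1
          have hterm : 0 ≤ (n.choose i : ℝ) * (1 - ε) ^ (n - i) * ε ^ (i - 1) := by
            have : 0 ≤ 1 - ε := by linarith
            positivity
          nlinarith
        · refine ⟨n, right_mem_Icc.2 (by omega), ?_⟩
          rw [div_lt_iff₀ (hD n)]
          have hweight := one_lt_mul_denom hlam hn
          simp only [Nat.choose_self, Nat.sub_self, pow_zero, Nat.cast_one, mul_one, one_mul]
          nlinarith [pow_pos hε0 (n - 1)]
    _ = n := by rw [sum_Icc_mul_choose_mul_pow, add_sub_cancel, one_pow, mul_one]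

/-- Lemma 4.3: for `r ≥ 3` and `λ ∈ [1/5, 1]`, `f_{r,λ}(ε) < λ²` for all `ε ∈ (0,1]`. -/
theorem stmt7 (r : ℕ) (hr : 3 ≤ r) (lam : ℝ) (hlam : lam ∈ Set.Icc (1 / 5 : ℝ) 1)
    (ε : ℝ) (hε : ε ∈ Set.Ioc (0 : ℝ) 1) :
    f r lam ε < lam ^ 2 := by
  obtain ⟨hlam, hlam1⟩ := hlam
  obtain ⟨hε0, hε1⟩ := hε
  have hn : 2 ≤ r - 1 := by omega
  have hcast : (r : ℝ) - 1 = (r - 1 : ℕ) := by push_cast [Nat.cast_sub (by omega : 1 ≤ r)]; rfl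
  have hf : f r lam ε = lam ^ 2 / (r - 1 : ℕ) * ∑ i ∈ Icc 1 (r - 1),
      ((r - 1).choose i : ℝ) * (1 - ε) ^ (r - 1 - i) * ε ^ (i - 1) / denom lam i := by
    rw [f, hcast, mul_sum, mul_sum]
    exact sum_congr rfl fun i _ => by unfold denom; ring
  have hpos : (0 : ℝ) < lam ^ 2 / (r - 1 : ℕ) := by
    have hlam0 : 0 < lam := by linarith
    have hn0 : (0 : ℝ) < (r - 1 : ℕ) := by exact_mod_cast (by omega : 0 < r - 1)
    positivity
  calc f r lam ε < lam ^ 2 / (r - 1 : ℕ) * (r - 1 : ℕ) := by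
        rw [hf]
        exact mul_lt_mul_of_pos_left (sum_choose_div_denom_lt hn hlam hlam1 hε0 hε1) hpos
    _ = lam ^ 2 := div_mul_cancel₀ _ (by exact_mod_cast (by omega : r - 1 ≠ 0))
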